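/- arXiv:1001.2806 — 5 statements merged into one kernel-verified Lean document; each statement's English description precedes it below -/
import Mathlib

section
/- Let N be a positive definite real symmetric n×n matrix, M a positive semidefinite real symmetric n×n matrix, and B a positive semidefinite real symmetric n×n matrix with M·B = 0. Define Ñ := (N⁻¹ + M)⁻¹. Then (B + Ñ)⁻¹ = (B + N)⁻¹ + M. -/
/-!
With `P = (B + N)⁻¹` we have `N * P = 1 - B * P`, so `M * B = 0` gives `M * N * P = M`, i.e.
`(N⁻¹ + M) * (N * P) = P + M`. Hence `(N⁻¹ + M)⁻¹ * (P + M) = N * P`, and expanding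
`(B + (N⁻¹ + M)⁻¹) * (P + M)` with `B * M = 0` (the transpose of `M * B = 0`) leaves
`B * P + N * P = 1`.
-/

namespace Matrix

variable {m R : Type*} [Fintype m]

lemma IsHermitian.mul_eq_zero_comm [NonUnitalNonAssocSemiring R] [StarRing R]
    {M B : Matrix m m R} (hM : M.IsHermitian) (hB : B.IsHermitian)
    (hMB : M * B = 0) : B * M = 0 := by
  simpa only [conjTranspose_mul, hM.eq, hB.eq, conjTranspose_zero] using congrArg (·ᴴ) hMB

variable [DecidableEq m] [CommRing R] {N M B : Matrix m m R}

lemma inv_add_inv_mul_eq_mul_inv_add (hN : IsUnit N.det) (hS : IsUnit (N⁻¹ + M).det)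
    (hBN : IsUnit (B + N).det) (hMB : M * B = 0) :
    (N⁻¹ + M)⁻¹ * ((B + N)⁻¹ + M) = N * (B + N)⁻¹ := by
  have hNP : N * (B + N)⁻¹ = 1 - B * (B + N)⁻¹ := by
    rw [eq_sub_iff_add_eq', ← add_mul, mul_nonsing_inv _ hBN]
  have key : (N⁻¹ + M) * (N * (B + N)⁻¹) = (B + N)⁻¹ + M := by
    rw [add_mul, nonsing_inv_mul_cancel_left _ _ hN, hNP, mul_sub, ← mul_assoc, hMB,
      zero_mul, mul_one, sub_zero]
  rw [← key, nonsing_inv_mul_cancel_left _ _ hS]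

lemma inv_add_inv_add_inv_eq (hN : IsUnit N.det) (hS : IsUnit (N⁻¹ + M).det)
    (hBN : IsUnit (B + N).det) (hMB : M * B = 0) (hBM : B * M = 0) :
    (B + (N⁻¹ + M)⁻¹)⁻¹ = (B + N)⁻¹ + M := by
  apply inv_eq_right_inv
  calc (B + (N⁻¹ + M)⁻¹) * ((B + N)⁻¹ + M)
      = B * (B + N)⁻¹ + B * M + (N⁻¹ + M)⁻¹ * ((B + N)⁻¹ + M) := by
        rw [add_mul, mul_add]
    _ = (B + N) * (B + N)⁻¹ := by
        rw [hBM, inv_add_inv_mul_eq_mul_inv_add hN hS hBN hMB, add_zero, add_mul]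
    _ = 1 := mul_nonsing_inv _ hBN

end Matrix

theorem enhancement_identity {n : ℕ}
    (N M B : Matrix (Fin n) (Fin n) ℝ)
    (hN : N.PosDef) (hM : M.PosSemidef) (hB : B.PosSemidef)
    (hMB : M * B = 0) :
    (B + (N⁻¹ + M)⁻¹)⁻¹ = (B + N)⁻¹ + M := by
  have hS : (N⁻¹ + M).PosDef := hN.inv.add_posSemidef hM
  have hBN : (B + N).PosDef := .posSemidef_add hB hN
  exact Matrix.inv_add_inv_add_inv_eq hN.det_pos.ne'.isUnit hS.det_pos.ne'.isUnit
    hBN.det_pos.ne'.isUnit hMB (hM.isHermitian.mul_eq_zero_comm hB.isHermitian hMB)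
end

section
/- Let N be a positive definite real symmetric n×n matrix, M a positive semidefinite real symmetric n×n matrix with M·B = 0 for a positive semidefinite matrix B, and Ñ := (N⁻¹ + M)⁻¹. Then det(B + Ñ)·det(N) = det(B + N)·det(Ñ). -/
open Matrix

/-
With Ñ = (N⁻¹ + M)⁻¹ and M B = 0 we have Ñ⁻¹ B = N⁻¹ B, so
B + Ñ = Ñ (Ñ⁻¹ B + 1) = Ñ (N⁻¹ B + 1) = Ñ N⁻¹ (B + N); taking determinants gives the identity.
-/

namespace Matrix

variable {ι R : Type*} [Fintype ι] [DecidableEq ι] [CommRing R] {N M B : Matrix ι ι R}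

theorem add_inv_inv_add_eq_inv_mul_inv_mul_add (hN : IsUnit N.det)
    (hNM : IsUnit (N⁻¹ + M).det) (hMB : M * B = 0) :
    B + (N⁻¹ + M)⁻¹ = (N⁻¹ + M)⁻¹ * N⁻¹ * (B + N) := by
  have hNB : (N⁻¹ + M) * B = N⁻¹ * B := by rw [Matrix.add_mul, hMB, add_zero]
  rw [Matrix.mul_assoc, Matrix.mul_add, nonsing_inv_mul N hN, ← hNB, Matrix.mul_add,
    ← Matrix.mul_assoc, nonsing_inv_mul _ hNM, Matrix.one_mul, Matrix.mul_one]

theorem det_add_inv_inv_add_mul_det (hN : IsUnit N.det)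
    (hNM : IsUnit (N⁻¹ + M).det) (hMB : M * B = 0) :
    (B + (N⁻¹ + M)⁻¹).det * N.det = (B + N).det * ((N⁻¹ + M)⁻¹).det := by
  rw [add_inv_inv_add_eq_inv_mul_inv_mul_add hN hNM hMB, det_mul, det_mul]
  linear_combination ((N⁻¹ + M)⁻¹.det * (B + N).det) * det_nonsing_inv_mul_det N hN

end Matrix

theorem enhancement_det_identity_general {n : ℕ}
    (N M B : Matrix (Fin n) (Fin n) ℝ)
    (hN : N.PosDef) (hM : M.PosSemidef)
    (hMB : M * B = 0) :
    (B + (N⁻¹ + M)⁻¹).det * N.det = (B + N).det * ((N⁻¹ + M)⁻¹).det :=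
  det_add_inv_inv_add_mul_det hN.det_pos.ne'.isUnit
    (hN.inv.add_posSemidef hM).det_pos.ne'.isUnit hMB

theorem enhancement_det_identity {n : ℕ}
    (N M B : Matrix (Fin n) (Fin n) ℝ)
    (hN : N.PosDef) (hM : M.PosSemidef) (hB : B.PosSemidef)
    (hMB : M * B = 0) :
    (B + (N⁻¹ + M)⁻¹).det * N.det = (B + N).det * ((N⁻¹ + M)⁻¹).det :=
  enhancement_det_identity_general N M B hN hM hMB
end

section
/- Let A, B, Ñ, N₂ be real symmetric n×n matrices with B ⪰ 0, Ñ ≻ 0, N₂ ≻ 0, A ⪰ 0, and suppose that for some positive semidefinite M, (B + Ñ)⁻¹ = (B + N₂)⁻¹ + M and M·(A − B) = 0 where A ⪰ B. Then (A + Ñ)(B + Ñ)⁻¹ = (A + N₂)(B + N₂)⁻¹, and consequently det(A + Ñ)/det(B + Ñ) = det(A + N₂)/det(B + N₂). -/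
/-!
Writing `A + N = (A - B) + (B + N)` gives `(A + N) * (B + N)⁻¹ = (A - B) * (B + N)⁻¹ + 1`.
The inverses for `N = Nt` and `N = N₂` differ by `M`, and `(A - B) * M = 0` is the transpose of
`M * (A - B) = 0` since both factors are symmetric; taking determinants gives the ratio identity.
-/

open Matrix

namespace Matrix

variable {ι α : Type*} [Fintype ι]

theorem IsHermitian.mul_eq_zero_swap [NonUnitalNonAssocSemiring α] [StarRing α]
    {M X : Matrix ι ι α} (hM : M.IsHermitian) (hX : X.IsHermitian) (h : M * X = 0) :
    X * M = 0 := by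
  simpa only [conjTranspose_mul, hM.eq, hX.eq, conjTranspose_zero] using congrArg (·ᴴ) h

variable [DecidableEq ι]

theorem add_mul_add_nonsing_inv [CommRing α] (A B N : Matrix ι ι α) (h : IsUnit (B + N).det) :
    (A + N) * (B + N)⁻¹ = (A - B) * (B + N)⁻¹ + 1 := by
  rw [show A + N = (A - B) + (B + N) by abel, add_mul, mul_nonsing_inv _ h]

theorem det_div_det_eq_of_mul_nonsing_inv_eq [Field α] {X Y P Q : Matrix ι ι α}
    (h : X * P⁻¹ = Y * Q⁻¹) : X.det / P.det = Y.det / Q.det := by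
  simpa only [det_mul, det_nonsing_inv, Ring.inverse_eq_inv', div_eq_mul_inv]
    using congrArg det h

end Matrix

theorem rate_preservation_identity_general {n : ℕ}
    (A B Nt N₂ M : Matrix (Fin n) (Fin n) ℝ)
    (hB : B.PosSemidef) (hNt : Nt.PosDef) (hN₂ : N₂.PosDef)
    (hM : M.PosSemidef)
    (hinv : (B + Nt)⁻¹ = (B + N₂)⁻¹ + M)
    (hAB : (A - B).PosSemidef)
    (hMA : M * (A - B) = 0) :
    (A + Nt) * (B + Nt)⁻¹ = (A + N₂) * (B + N₂)⁻¹ ∧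
      (A + Nt).det / (B + Nt).det = (A + N₂).det / (B + N₂).det := by
  have hunitNt : IsUnit (B + Nt).det := (hNt.posSemidef_add hB).det_pos.ne'.isUnit
  have hunitN₂ : IsUnit (B + N₂).det := (hN₂.posSemidef_add hB).det_pos.ne'.isUnit
  have hkey : (A - B) * (B + Nt)⁻¹ = (A - B) * (B + N₂)⁻¹ := by
    rw [hinv, mul_add, hM.isHermitian.mul_eq_zero_swap hAB.isHermitian hMA, add_zero]
  have hratio : (A + Nt) * (B + Nt)⁻¹ = (A + N₂) * (B + N₂)⁻¹ := by
    rw [add_mul_add_nonsing_inv A B Nt hunitNt, add_mul_add_nonsing_inv A B N₂ hunitN₂, hkey]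
  exact ⟨hratio, det_div_det_eq_of_mul_nonsing_inv_eq hratio⟩

theorem rate_preservation_identity {n : ℕ}
    (A B Nt N₂ M : Matrix (Fin n) (Fin n) ℝ)
    (hA : A.PosSemidef) (hB : B.PosSemidef) (hNt : Nt.PosDef) (hN₂ : N₂.PosDef)
    (hM : M.PosSemidef)
    (hinv : (B + Nt)⁻¹ = (B + N₂)⁻¹ + M)
    (hAB : (A - B).PosSemidef)
    (hMA : M * (A - B) = 0) :
    (A + Nt) * (B + Nt)⁻¹ = (A + N₂) * (B + N₂)⁻¹ ∧
      (A + Nt).det / (B + Nt).det = (A + N₂).det / (B + N₂).det :=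
  rate_preservation_identity_general A B Nt N₂ M hB hNt hN₂ hM hinv hAB hMA
end

section
/- Let N₁ ⪯ N₂ be positive definite real symmetric n×n matrices and let A ⪰ B ⪰ 0 be real symmetric positive semidefinite matrices. Then det(A+N₁)/det(B+N₁) ≥ det(A+N₂)/det(B+N₂). -/
/-!
Write `M = B + N` and `C = A - B ⪰ 0`, so that the ratio is `det (M + C) / det M`. With
`S = √C`, the matrix determinant lemma turns this into `det (1 + S M⁻¹ S)`. Matrix inversion
is antitone in the Loewner order, so increasing the noise decreases `1 + S M⁻¹ S` in that order,
and the determinant is monotone on positive definite matrices.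
-/

open Matrix
open scoped MatrixOrder ComplexOrder

namespace Matrix

variable {ι : Type*} [Fintype ι] [DecidableEq ι]

/-- Both inequalities are Schur-complement conditions for the same block matrix
`[[M₂, 1], [1, M₁⁻¹]]`. -/
theorem PosDef.posSemidef_inv_sub_inv {K : Type*} [Field K] [PartialOrder K] [StarRing K]
    [StarOrderedRing K] {M₁ M₂ : Matrix ι ι K} (hM₁ : M₁.PosDef) (hM : (M₂ - M₁).PosSemidef) :
    (M₁⁻¹ - M₂⁻¹).PosSemidef := by
  have hM₂ : M₂.PosDef := by simpa using hM₁.add_posSemidef hM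
  have := hM₁.isUnit.invertible
  have := hM₂.isUnit.invertible
  have hblock : (fromBlocks M₂ 1 1ᴴ M₁⁻¹).PosSemidef := by
    rw [PosDef.fromBlocks₂₂ _ _ hM₁.inv]
    simpa using hM
  simpa using (PosDef.fromBlocks₁₁ _ _ hM₂).mp hblock

variable {𝕜 : Type*} [RCLike 𝕜]

theorem PosSemidef.one_le_det_one_add {P : Matrix ι ι 𝕜} (hP : P.PosSemidef) :
    1 ≤ (1 + P).det := by
  have hX : (1 + P).IsHermitian := isHermitian_one.add hP.isHermitian
  have hspec : ∀ x ∈ spectrum ℝ (1 + P), 1 ≤ x := by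
    rw [← algebraMap_le_iff_le_spectrum, map_one]
    exact le_add_of_nonneg_right hP.nonneg
  rw [hX.det_eq_prod_eigenvalues, ← RCLike.ofReal_prod, ← RCLike.ofReal_one,
    RCLike.ofReal_le_ofReal]
  exact Finset.one_le_prod fun i _ => hspec _ (hX.eigenvalues_mem_spectrum_real i)

theorem PosSemidef.sqrt_mul_mul_sqrt {M : Matrix ι ι 𝕜} (hM : M.PosSemidef) (C : Matrix ι ι 𝕜) :
    (CFC.sqrt C * M * CFC.sqrt C).PosSemidef := by
  simpa only [(CFC.sqrt_nonneg C).posSemidef.isHermitian.eq] using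
    hM.conjTranspose_mul_mul_same (CFC.sqrt C)

theorem det_add_eq_det_mul_det_one_add_sqrt {M C : Matrix ι ι 𝕜} (hM : IsUnit M.det)
    (hC : C.PosSemidef) :
    (M + C).det = M.det * (1 + CFC.sqrt C * M⁻¹ * CFC.sqrt C).det := by
  rw [← det_add_mul _ _ hM, CFC.sqrt_mul_sqrt_self C hC.nonneg]

theorem PosDef.det_add_div_det {M C : Matrix ι ι 𝕜} (hM : M.PosDef) (hC : C.PosSemidef) :
    (M + C).det / M.det = (1 + CFC.sqrt C * M⁻¹ * CFC.sqrt C).det := by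
  rw [det_add_eq_det_mul_det_one_add_sqrt hM.det_pos.ne'.isUnit hC,
    mul_div_cancel_left₀ _ hM.det_pos.ne']

theorem PosDef.det_le_det_add {M D : Matrix ι ι 𝕜} (hM : M.PosDef) (hD : D.PosSemidef) :
    M.det ≤ (M + D).det := by
  rw [det_add_eq_det_mul_det_one_add_sqrt hM.det_pos.ne'.isUnit hD]
  exact le_mul_of_one_le_right hM.det_pos.le
    (hM.inv.posSemidef.sqrt_mul_mul_sqrt D).one_le_det_one_add

theorem PosDef.det_add_div_det_le_det_add_div_det {M₁ M₂ C : Matrix ι ι 𝕜} (hM₁ : M₁.PosDef)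
    (hM : (M₂ - M₁).PosSemidef) (hC : C.PosSemidef) :
    (M₂ + C).det / M₂.det ≤ (M₁ + C).det / M₁.det := by
  have hM₂ : M₂.PosDef := by simpa using hM₁.add_posSemidef hM
  set S := CFC.sqrt C
  have hgap : (S * M₁⁻¹ * S - S * M₂⁻¹ * S).PosSemidef := by
    simpa only [Matrix.mul_sub, Matrix.sub_mul] using
      (hM₁.posSemidef_inv_sub_inv hM).sqrt_mul_mul_sqrt C
  rw [hM₁.det_add_div_det hC, hM₂.det_add_div_det hC]
  calc (1 + S * M₂⁻¹ * S).det
      ≤ (1 + S * M₂⁻¹ * S + (S * M₁⁻¹ * S - S * M₂⁻¹ * S)).det :=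
        (PosDef.one.add_posSemidef (hM₂.inv.posSemidef.sqrt_mul_mul_sqrt C)).det_le_det_add hgap
    _ = (1 + S * M₁⁻¹ * S).det := by rw [add_add_sub_cancel]

end Matrix

theorem det_ratio_antitone_in_noise_general {n : ℕ}
    (N₁ N₂ A B : Matrix (Fin n) (Fin n) ℝ)
    (hN₁ : N₁.PosDef) (hN : (N₂ - N₁).PosSemidef)
    (hB : B.PosSemidef) (hAB : (A - B).PosSemidef) :
    (A + N₂).det / (B + N₂).det ≤ (A + N₁).det / (B + N₁).det := by
  have hsplit (N : Matrix (Fin n) (Fin n) ℝ) : A + N = (B + N) + (A - B) := by abel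
  rw [hsplit N₁, hsplit N₂]
  exact (PosDef.posSemidef_add hB hN₁).det_add_div_det_le_det_add_div_det
    (by rwa [add_sub_add_left_eq_sub]) hAB

theorem det_ratio_antitone_in_noise {n : ℕ}
    (N₁ N₂ A B : Matrix (Fin n) (Fin n) ℝ)
    (hN₁ : N₁.PosDef) (hN₂ : N₂.PosDef) (hN : (N₂ - N₁).PosSemidef)
    (hB : B.PosSemidef) (hAB : (A - B).PosSemidef) :
    (A + N₂).det / (B + N₂).det ≤ (A + N₁).det / (B + N₁).det :=
  det_ratio_antitone_in_noise_general N₁ N₂ A B hN₁ hN hB hAB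
end

section
/- Let N₁ ≻ 0 be a real symmetric n×n matrix, M₁ ⪰ 0, λ > 0, and B ⪰ 0 with M₁B = 0. Set Ñ := (N₁⁻¹ + M₁/λ)⁻¹. Then λ(B+Ñ)⁻¹ = λ(B+N₁)⁻¹ + M₁. Moreover, if additionally λ(B+N₁)⁻¹ + M₁ = λ(B+N₂)⁻¹ + M₂ for some N₂ ≻ 0 and M₂ ⪰ 0 (the KKT stationarity condition), then λ(B+Ñ)⁻¹ = λ(B+N₂)⁻¹ + M₂ and Ñ ⪯ N₂. -/
/-!
Writing `Ñ⁻¹ = N₁⁻¹ + M₁/λ` gives `N₁ = Ñ + λ⁻¹ N₁ M₁ Ñ`, and since `B M₁ = 0` this factors as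
`B + Ñ = (B + N₁)(1 - λ⁻¹ M₁ Ñ)`. Multiplying by `λ(B + N₁)⁻¹ + M₁` and using `M₁ B = 0` gives
`λ · 1`, which is the enhancement identity. Under the KKT condition it reads
`λ(B + Ñ)⁻¹ = λ(B + N₂)⁻¹ + M₂ ⪰ λ(B + N₂)⁻¹`, and inversion is Loewner-antitone on positive
definite matrices, so `B + Ñ ⪯ B + N₂`.
-/

open Matrix

namespace Matrix

section Field

variable {ι K : Type*} [Fintype ι] [DecidableEq ι] [Field K]

theorem add_inv_inv_add_smul_eq_mul {B N M : Matrix ι ι K} {c : K}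
    (hN : IsUnit N.det) (hS : IsUnit (N⁻¹ + c⁻¹ • M).det) (hBM : B * M = 0) :
    B + (N⁻¹ + c⁻¹ • M)⁻¹ = (B + N) * (1 - c⁻¹ • (M * (N⁻¹ + c⁻¹ • M)⁻¹)) := by
  set S := N⁻¹ + c⁻¹ • M
  have hN_eq : N = S⁻¹ + c⁻¹ • (N * M * S⁻¹) :=
    calc N = N * S * S⁻¹ := by rw [Matrix.mul_assoc, mul_nonsing_inv _ hS, Matrix.mul_one]
      _ = S⁻¹ + c⁻¹ • (N * M * S⁻¹) := by
        rw [Matrix.mul_add, mul_nonsing_inv _ hN, Matrix.add_mul, Matrix.one_mul,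
          Matrix.mul_smul, Matrix.smul_mul]
  have hNM : N * M = (B + N) * M := by rw [Matrix.add_mul, hBM, zero_add]
  rw [Matrix.mul_sub, Matrix.mul_one, Matrix.mul_smul, ← Matrix.mul_assoc, ← hNM]
  nth_rewrite 1 [hN_eq]
  abel

theorem smul_inv_add_inv_inv_add_smul {B N M : Matrix ι ι K} {c : K} (hc : c ≠ 0)
    (hN : IsUnit N.det) (hBN : IsUnit (B + N).det) (hS : IsUnit (N⁻¹ + c⁻¹ • M).det)
    (hMB : M * B = 0) (hBM : B * M = 0) :
    c • (B + (N⁻¹ + c⁻¹ • M)⁻¹)⁻¹ = c • (B + N)⁻¹ + M := by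
  set Ñ := (N⁻¹ + c⁻¹ • M)⁻¹
  have hMÑ : M * (B + Ñ) = M * Ñ := by rw [Matrix.mul_add, hMB, zero_add]
  have hleft : (c⁻¹ • (c • (B + N)⁻¹ + M)) * (B + Ñ) = 1 := by
    rw [smul_add, smul_smul, inv_mul_cancel₀ hc, one_smul, Matrix.add_mul, Matrix.smul_mul, hMÑ,
      add_inv_inv_add_smul_eq_mul hN hS hBM, ← Matrix.mul_assoc, nonsing_inv_mul _ hBN,
      Matrix.one_mul, sub_add_cancel]
  rw [inv_eq_left_inv hleft, smul_smul, mul_inv_cancel₀ hc, one_smul]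

end Field

section LoewnerOrder

open scoped MatrixOrder ComplexOrder

variable {ι 𝕜 : Type*} [RCLike 𝕜]

theorem PosDef.of_le {A B : Matrix ι ι 𝕜} (hA : A.PosDef) (hAB : A ≤ B) : B.PosDef := by
  simpa using hA.add_posSemidef hAB

variable [Fintype ι] [DecidableEq ι]

/-- The Schur complement criterion applied twice to `[B 1; 1 A⁻¹]`. -/
theorem PosDef.inv_anti {A B : Matrix ι ι 𝕜} (hA : A.PosDef) (hAB : A ≤ B) : B⁻¹ ≤ A⁻¹ := by
  let _ := hA.isUnit.invertible
  let _ := (hA.of_le hAB).isUnit.invertible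
  have hblock : (fromBlocks B 1 1ᴴ A⁻¹).PosSemidef := by
    rw [PosDef.fromBlocks₂₂ B 1 hA.inv, inv_inv_of_invertible]
    simpa using le_iff.mp hAB
  rw [PosDef.fromBlocks₁₁ 1 A⁻¹ (hA.of_le hAB)] at hblock
  simpa [le_iff] using hblock

theorem PosDef.le_of_smul_inv_eq_smul_inv_add {A B M : Matrix ι ι 𝕜} {c : ℝ} (hB : B.PosDef)
    (hc : 0 < c) (hM : M.PosSemidef) (h : c • A⁻¹ = c • B⁻¹ + M) : A ≤ B := by
  have hinv : B⁻¹ ≤ A⁻¹ := by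
    refine le_of_smul_le_smul_left (le_iff.mpr ?_) hc
    rwa [h, add_sub_cancel_left]
  have hA : A.PosDef := posDef_inv_iff.mp (hB.inv.of_le hinv)
  let _ := hA.isUnit.invertible
  let _ := hB.isUnit.invertible
  simpa only [inv_inv_of_invertible] using hB.inv.inv_anti hinv

end LoewnerOrder

end Matrix

theorem enhancement_with_kkt {n : ℕ}
    (N₁ N₂ M₁ M₂ B : Matrix (Fin n) (Fin n) ℝ) (lam : ℝ)
    (hN₁ : N₁.PosDef) (hM₁ : M₁.PosSemidef) (hlam : 0 < lam)
    (hB : B.PosSemidef) (hMB : M₁ * B = 0)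
    (hN₂ : N₂.PosDef) (hM₂ : M₂.PosSemidef) :
    lam • (B + (N₁⁻¹ + lam⁻¹ • M₁)⁻¹)⁻¹ = lam • (B + N₁)⁻¹ + M₁ ∧
      (lam • (B + N₁)⁻¹ + M₁ = lam • (B + N₂)⁻¹ + M₂ →
        lam • (B + (N₁⁻¹ + lam⁻¹ • M₁)⁻¹)⁻¹ = lam • (B + N₂)⁻¹ + M₂ ∧
          (N₂ - (N₁⁻¹ + lam⁻¹ • M₁)⁻¹).PosSemidef) := by
  have hS : (N₁⁻¹ + lam⁻¹ • M₁).PosDef :=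
    hN₁.inv.add_posSemidef (hM₁.smul (inv_nonneg.mpr hlam.le))
  have hBM : B * M₁ = 0 := by
    rw [← hB.1.eq, ← hM₁.1.eq, ← conjTranspose_mul, hMB, conjTranspose_zero]
  have enhancement : lam • (B + (N₁⁻¹ + lam⁻¹ • M₁)⁻¹)⁻¹ = lam • (B + N₁)⁻¹ + M₁ :=
    smul_inv_add_inv_inv_add_smul hlam.ne' hN₁.det_pos.ne'.isUnit
      (PosDef.posSemidef_add hB hN₁).det_pos.ne'.isUnit hS.det_pos.ne'.isUnit hMB hBM
  refine ⟨enhancement, fun hkkt => ⟨enhancement.trans hkkt, ?_⟩⟩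
  have hle := PosDef.le_of_smul_inv_eq_smul_inv_add (PosDef.posSemidef_add hB hN₂) hlam hM₂
    (enhancement.trans hkkt)
  simpa using le_iff.mp hle
end
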